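/- Let k be a field, (A,·) and (B,∘) associative k-algebras, and let ℓ_A, r_A : A → End_k(B) and ℓ_B, r_B : B → End_k(A) be linear maps such that (B, ℓ_A, r_A) is an A-bimodule and (A, ℓ_B, r_B) is a B-bimodule. Assume for all x, y ∈ A and a, b ∈ B: ℓ_A(x)(a∘b) = ℓ_A(x r_B(a))b + (ℓ_A(x)a)∘b; (a∘b) r_A(x) = a r_A(ℓ_B(b)x) + a∘(b r_A(x)); ℓ_B(a)(x·y) = ℓ_B(a r_A(x))y + (ℓ_B(a)x)·y; (x·y) r_B(a) = x r_B(ℓ_A(y)a) + x·(y r_B(a)); ℓ_A(ℓ_B(a)x)b + (a r_A(x))∘b = a r_A(x r_B(b)) + a∘(ℓ_A(x)b); and ℓ_B(ℓ_A(x)a)y + (x r_B(a))·y = x r_B(a r_A(y)) + x·(ℓ_B(a)y). Then the product on A⊕B defined by (x,a)*(y,b) = (x·y + ℓ_B(a)y + x r_B(b), a∘b + ℓ_A(x)b + a r_A(y)) is associative. -/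

import Mathlib

/-!
Associativity of the product on `A × B` splits into an `A`-component and a `B`-component.
Expanding `(p q) s` and `p (q s)` in the `A`-component, the bimodule axioms of `A` over `B`
identify most terms, and the remaining ones are matched by the compatibility identities for
`ℓ_B(a)(x·y)`, `(x·y) r_B(a)` and `ℓ_B(ℓ_A(x)a)y + (x r_B(a))·y`. Exchanging the roles of `A`
and `B` turns the `B`-component into the `A`-component of the swapped matched pair.
-/

namespace MatchedPair

variable {R A B : Type*} [CommSemiring R]
  [NonUnitalRing A] [Module R A] [NonUnitalRing B] [Module R B]

/-- `ℓA x b` stands for `ℓ_A(x)b`, `rA y a` for `a r_A(y)`, `ℓB a x` for `ℓ_B(a)x` and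
`rB b x` for `x r_B(b)`. -/
def mul (ℓA rA : A →ₗ[R] B →ₗ[R] B) (ℓB rB : B →ₗ[R] A →ₗ[R] A) (p q : A × B) : A × B :=
  (p.1 * q.1 + ℓB p.2 q.1 + rB q.2 p.1, p.2 * q.2 + ℓA p.1 q.2 + rA q.1 p.2)

variable (ℓA rA : A →ₗ[R] B →ₗ[R] B) (ℓB rB : B →ₗ[R] A →ₗ[R] A)

theorem fst_mul_assoc
    (hℓ : ∀ (a b : B) (x : A), ℓB (a * b) x = ℓB a (ℓB b x))
    (hr : ∀ (a b : B) (x : A), rB b (rB a x) = rB (a * b) x)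
    (hℓr : ∀ (a b : B) (x : A), rB b (ℓB a x) = ℓB a (rB b x))
    (hℓ_mul : ∀ (a : B) (x y : A), ℓB a (x * y) = ℓB (rA x a) y + (ℓB a x) * y)
    (hr_mul : ∀ (a : B) (x y : A), rB a (x * y) = rB (ℓA y a) x + x * (rB a y))
    (hℓ_rA : ∀ (a : B) (x y : A), ℓB (ℓA x a) y + (rB a x) * y = rB (rA y a) x + x * (ℓB a y))
    (p q s : A × B) :
    (mul ℓA rA ℓB rB (mul ℓA rA ℓB rB p q) s).1 = (mul ℓA rA ℓB rB p (mul ℓA rA ℓB rB q s)).1 := by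
  obtain ⟨x, a⟩ := p
  obtain ⟨y, b⟩ := q
  obtain ⟨z, c⟩ := s
  simp only [mul, map_add, LinearMap.add_apply, add_mul, mul_add, mul_assoc, hℓ, hr, hℓr]
  linear_combination (norm := abel) hr_mul c x y - hℓ_mul a y z + hℓ_rA b x z

theorem mul_assoc
    (hA1 : ∀ (x y : A) (b : B), ℓA (x * y) b = ℓA x (ℓA y b))
    (hA2 : ∀ (x y : A) (b : B), rA y (rA x b) = rA (x * y) b)
    (hA3 : ∀ (x y : A) (b : B), rA y (ℓA x b) = ℓA x (rA y b))
    (hB1 : ∀ (a b : B) (x : A), ℓB (a * b) x = ℓB a (ℓB b x))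
    (hB2 : ∀ (a b : B) (x : A), rB b (rB a x) = rB (a * b) x)
    (hB3 : ∀ (a b : B) (x : A), rB b (ℓB a x) = ℓB a (rB b x))
    (h24 : ∀ (x : A) (a b : B), ℓA x (a * b) = ℓA (rB a x) b + (ℓA x a) * b)
    (h25 : ∀ (x : A) (a b : B), rA x (a * b) = rA (ℓB b x) a + a * (rA x b))
    (h26 : ∀ (a : B) (x y : A), ℓB a (x * y) = ℓB (rA x a) y + (ℓB a x) * y)
    (h27 : ∀ (a : B) (x y : A), rB a (x * y) = rB (ℓA y a) x + x * (rB a y))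
    (h28 : ∀ (x : A) (a b : B), ℓA (ℓB a x) b + (rA x a) * b = rA (rB b x) a + a * (ℓA x b))
    (h29 : ∀ (a : B) (x y : A), ℓB (ℓA x a) y + (rB a x) * y = rB (rA y a) x + x * (ℓB a y))
    (p q s : A × B) :
    mul ℓA rA ℓB rB (mul ℓA rA ℓB rB p q) s = mul ℓA rA ℓB rB p (mul ℓA rA ℓB rB q s) :=
  Prod.ext (fst_mul_assoc ℓA rA ℓB rB hB1 hB2 hB3 h26 h27 h29 p q s)
    (fst_mul_assoc ℓB rB ℓA rA hA1 hA2 hA3 h24 h25 h28 p.swap q.swap s.swap)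

end MatchedPair

theorem stmt1 {k A B : Type} [Field k]
    [NonUnitalRing A] [Module k A]
    [NonUnitalRing B] [Module k B]
    (ℓA rA : A →ₗ[k] B →ₗ[k] B) (ℓB rB : B →ₗ[k] A →ₗ[k] A)
    -- (B, ℓA, rA) is an A-bimodule
    (hA1 : ∀ (x y : A) (b : B), ℓA (x * y) b = ℓA x (ℓA y b))
    (hA2 : ∀ (x y : A) (b : B), rA y (rA x b) = rA (x * y) b)
    (hA3 : ∀ (x y : A) (b : B), rA y (ℓA x b) = ℓA x (rA y b))
    -- (A, ℓB, rB) is a B-bimodule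
    (hB1 : ∀ (a b : B) (x : A), ℓB (a * b) x = ℓB a (ℓB b x))
    (hB2 : ∀ (a b : B) (x : A), rB b (rB a x) = rB (a * b) x)
    (hB3 : ∀ (a b : B) (x : A), rB b (ℓB a x) = ℓB a (rB b x))
    -- matched pair compatibility conditions
    (h24 : ∀ (x : A) (a b : B), ℓA x (a * b) = ℓA (rB a x) b + (ℓA x a) * b)
    (h25 : ∀ (x : A) (a b : B), rA x (a * b) = rA (ℓB b x) a + a * (rA x b))
    (h26 : ∀ (a : B) (x y : A), ℓB a (x * y) = ℓB (rA x a) y + (ℓB a x) * y)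
    (h27 : ∀ (a : B) (x y : A), rB a (x * y) = rB (ℓA y a) x + x * (rB a y))
    (h28 : ∀ (x : A) (a b : B), ℓA (ℓB a x) b + (rA x a) * b = rA (rB b x) a + a * (ℓA x b))
    (h29 : ∀ (a : B) (x y : A), ℓB (ℓA x a) y + (rB a x) * y = rB (rA y a) x + x * (ℓB a y)) :
    let m : A × B → A × B → A × B := fun p q =>
      (p.1 * q.1 + ℓB p.2 q.1 + rB q.2 p.1, p.2 * q.2 + ℓA p.1 q.2 + rA q.1 p.2)
    ∀ p q s : A × B, m (m p q) s = m p (m q s) :=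
  MatchedPair.mul_assoc ℓA rA ℓB rB hA1 hA2 hA3 hB1 hB2 hB3 h24 h25 h26 h27 h28 h29
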